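/- arXiv:2303.03673 — 2 statements merged into one kernel-verified Lean document; each statement's English description precedes it below -/
import Mathlib

section
/- Suppose h_ℓ = h₀ 2^{−ℓ} for ℓ = 0,…,L, and for each ℓ let λ_{h_ℓ} : Ω → ℝ satisfy |λ(ω) − λ_{h_ℓ}(ω)| ≤ C_λ h_ℓ² for all ω ∈ Ω, where λ(ω) ≥ λ̌ > 0 for all ω. Let N_0,…,N_L ∈ ℕ be positive and ω_{ℓ,n} ∈ Ω arbitrary sample points. If h₀² ≤ λ̌ / (12 C_λ), then the multilevel sum Ỹ = Σ_{n=1}^{N_0} λ_{h_0}(ω_{0,n})/N_0 + Σ_{ℓ=1}^{L} Σ_{n=1}^{N_ℓ} (λ_{h_ℓ}(ω_{ℓ,n}) − λ_{h_{ℓ-1}}(ω_{ℓ,n}))/N_ℓ is strictly positive. -/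
private lemma avg_ge {f : ℕ → ℝ} {c : ℝ} {N : ℕ} (hN : 0 < N) (h : ∀ n, c ≤ f n) :
    c ≤ (∑ n ∈ Finset.range N, f n) / N := by
  rw [le_div_iff₀ (by positivity)]
  calc c * N = (Finset.range N).card • c := by
        rw [Finset.card_range, nsmul_eq_mul, mul_comm]
    _ ≤ ∑ n ∈ Finset.range N, f n := Finset.card_nsmul_le_sum _ _ _ (fun i _ => h i)

private lemma two_zpow_neg_sq (ℓ : ℕ) : ((2:ℝ) ^ (-(ℓ:ℤ))) ^ 2 = (1/4 : ℝ) ^ ℓ := by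
  have : ((2:ℝ) ^ (-(ℓ:ℤ))) = (2⁻¹ : ℝ) ^ ℓ := by
    rw [zpow_neg, zpow_natCast, inv_pow]
  rw [this, ← pow_mul, mul_comm, pow_mul]
  norm_num

private lemma geo_eq : ∀ L : ℕ, ∑ ℓ ∈ Finset.Icc 1 L, (1/4 : ℝ) ^ ℓ = (1 - (1/4:ℝ)^L) / 3 := by
  intro L
  induction L with
  | zero => simp
  | succ L ih =>
      rw [Finset.sum_Icc_succ_top (by omega), ih]
      ring

private lemma geo_bound (L : ℕ) : ∑ ℓ ∈ Finset.Icc 1 L, (1/4 : ℝ) ^ ℓ ≤ 1/3 := by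
  rw [geo_eq]
  have : (0:ℝ) ≤ (1/4:ℝ)^L := by positivity
  linarith

theorem mlmc_estimator_positive
    {Ω : Type*} (L : ℕ)
    (lam : Ω → ℝ) (lamh : ℕ → Ω → ℝ)
    (h₀ Clam lamCheck : ℝ) (hh₀ : 0 < h₀) (hClam : 0 < Clam)
    (hlamCheck : 0 < lamCheck)
    (hlower : ∀ ω, lamCheck ≤ lam ω)
    (herr : ∀ ℓ : ℕ, ∀ ω, |lam ω - lamh ℓ ω| ≤ Clam * (h₀ * (2:ℝ) ^ (-(ℓ:ℤ))) ^ 2)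
    (N : ℕ → ℕ) (hN : ∀ ℓ, 0 < N ℓ)
    (ωs : ℕ → ℕ → Ω)
    (hmesh : h₀ ^ 2 ≤ lamCheck / (12 * Clam)) :
    0 < (∑ n ∈ Finset.range (N 0), lamh 0 (ωs 0 n)) / (N 0 : ℝ) +
        ∑ ℓ ∈ Finset.Icc 1 L,
          (∑ n ∈ Finset.range (N ℓ), (lamh ℓ (ωs ℓ n) - lamh (ℓ - 1) (ωs ℓ n))) /
            (N ℓ : ℝ) := by
  -- key: Clam * h₀^2 ≤ lamCheck / 12
  have hkey : Clam * h₀ ^ 2 ≤ lamCheck / 12 := by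
    have := mul_le_mul_of_nonneg_left hmesh hClam.le
    calc Clam * h₀ ^ 2 ≤ Clam * (lamCheck / (12 * Clam)) := this
      _ = lamCheck / 12 := by field_simp
  -- error bound in convenient form
  have herr' : ∀ ℓ : ℕ, ∀ ω, |lam ω - lamh ℓ ω| ≤ Clam * h₀ ^ 2 * (1/4:ℝ)^ℓ := by
    intro ℓ ω
    have := herr ℓ ω
    rwa [mul_pow, two_zpow_neg_sq, ← mul_assoc] at this
  -- first term
  have hA : lamCheck - Clam * h₀ ^ 2 ≤
      (∑ n ∈ Finset.range (N 0), lamh 0 (ωs 0 n)) / (N 0 : ℝ) := by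
    refine avg_ge (hN 0) fun n => ?_
    have h1 := herr' 0 (ωs 0 n)
    have h2 := hlower (ωs 0 n)
    have := abs_le.mp h1
    simp only [pow_zero, mul_one] at this
    linarith [this.1, this.2]
  -- per-level bounds
  have hB : ∀ ℓ ∈ Finset.Icc 1 L,
      -(5 * (Clam * h₀ ^ 2) * (1/4:ℝ)^ℓ) ≤
        (∑ n ∈ Finset.range (N ℓ), (lamh ℓ (ωs ℓ n) - lamh (ℓ - 1) (ωs ℓ n))) / (N ℓ : ℝ) := by
    intro ℓ hℓ
    have hℓ1 : 1 ≤ ℓ := (Finset.mem_Icc.mp hℓ).1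
    refine avg_ge (hN ℓ) fun n => ?_
    set ω := ωs ℓ n
    have h1 := abs_le.mp (herr' ℓ ω)
    have h2 := abs_le.mp (herr' (ℓ - 1) ω)
    have hpow : (1/4:ℝ)^(ℓ-1) = 4 * (1/4:ℝ)^ℓ := by
      have : ℓ = (ℓ - 1) + 1 := by omega
      rw [this]
      simp [pow_succ]
      ring
    rw [hpow] at h2
    nlinarith [h1.1, h1.2, h2.1, h2.2]
  -- sum the level bounds
  have hBsum : -(5 * (Clam * h₀ ^ 2) * (1/3:ℝ)) ≤
      ∑ ℓ ∈ Finset.Icc 1 L,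
        (∑ n ∈ Finset.range (N ℓ), (lamh ℓ (ωs ℓ n) - lamh (ℓ - 1) (ωs ℓ n))) / (N ℓ : ℝ) := by
    calc -(5 * (Clam * h₀ ^ 2) * (1/3:ℝ))
        ≤ -(5 * (Clam * h₀ ^ 2) * ∑ ℓ ∈ Finset.Icc 1 L, (1/4:ℝ)^ℓ) := by
          have := geo_bound L
          nlinarith [mul_pos hClam (pow_pos hh₀ 2)]
      _ = ∑ ℓ ∈ Finset.Icc 1 L, -(5 * (Clam * h₀ ^ 2) * (1/4:ℝ)^ℓ) := by
          rw [Finset.mul_sum, ← Finset.sum_neg_distrib]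
      _ ≤ _ := Finset.sum_le_sum hB
  nlinarith [mul_pos hClam (pow_pos hh₀ 2)]
end

section
/- Let t ∈ [0,1], and consider on a complex Hilbert space V sesquilinear forms A, B with primal homotopy eigenpairs: A(u_t, v) + t B(u_t, v) = λ_t ⟨u_t, v⟩ for all v ∈ V, and dual pairs A(w, u*_t) + t B(w, u*_t) = conj(λ*_t) ⟨w, u*_t⟩ for all w ∈ V, with λ_t = conj(λ*_t). Then (λ₁ − λ_t)·(⟨u₁, u*_t⟩ + ⟨u_t, u*₁⟩) = (1 − t)·(B(u₁, u*_t) + B(u_t, u*₁)). -/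
theorem homotopy_eigenvalue_identity
    {V : Type*}
    (A B ip : V → V → ℂ)
    (t : ℝ) (ht0 : 0 ≤ t) (ht1 : t ≤ 1)
    (lam1 lamt : ℂ) (u1 ut us1 ust : V)
    (hprimal1 : ∀ v, A u1 v + B u1 v = lam1 * ip u1 v)
    (hprimalt : ∀ v, A ut v + (t : ℂ) * B ut v = lamt * ip ut v)
    (hdual1 : ∀ w, A w us1 + B w us1 = lam1 * ip w us1)
    (hdualt : ∀ w, A w ust + (t : ℂ) * B w ust = lamt * ip w ust) :
    (lam1 - lamt) * (ip u1 ust + ip ut us1) =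
      (1 - (t : ℂ)) * (B u1 ust + B ut us1) := by
  linear_combination hdualt u1 - hprimal1 ust + hprimalt us1 - hdual1 ut
end
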